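/- Let p be an odd prime, k > 0, n = 2p^k, and let G be a non-empty circulant graph on n vertices. Then the reduced Euler characteristic of the independence complex Δ(G) is nonzero; more precisely χ̃(Δ(G)) ≡ ±1 (mod p). -/

import Mathlib

/-- Circular distance on `ZMod n`. -/
def circDist (n : ℕ) (a b : ZMod n) : ℕ := min (a - b).val (b - a).val

/-- The circulant graph `C_n(S)`. -/
def circGraph (n : ℕ) (S : Set ℕ) : SimpleGraph (ZMod n) where
  Adj a b := a ≠ b ∧ circDist n a b ∈ S
  symm := by
    constructor; intro a b h
    exact ⟨h.1.symm, by simpa [circDist, min_comm] using h.2⟩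
  loopless := by constructor; intro a h; exact h.1 rfl

/-- `A` is an independent set of `C_n(S)`. -/
def IsIndepSet' (n : ℕ) (S : Set ℕ) (A : Finset (ZMod n)) : Prop :=
  ∀ a ∈ A, ∀ b ∈ A, ¬ (circGraph n S).Adj a b

/-- `A` is a clique of `C_n(S)`. -/
def IsClique' (n : ℕ) (S : Set ℕ) (A : Finset (ZMod n)) : Prop :=
  ∀ a ∈ A, ∀ b ∈ A, a ≠ b → (circGraph n S).Adj a b

/-- The number of independent sets of cardinality `i` (this is `f_{i-1}`). -/
noncomputable def indepCount (n : ℕ) (S : Set ℕ) (i : ℕ) : ℕ :=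
  Nat.card {A : Finset (ZMod n) // A.card = i ∧ IsIndepSet' n S A}

/-- The number of cliques of cardinality `i`. -/
noncomputable def cliqueCount (n : ℕ) (S : Set ℕ) (i : ℕ) : ℕ :=
  Nat.card {A : Finset (ZMod n) // A.card = i ∧ IsClique' n S A}

/-- The reduced Euler characteristic of the independence complex of `C_n(S)`. -/
noncomputable def redEuler (n : ℕ) (S : Set ℕ) : ℤ :=
  ∑ i ∈ Finset.range (n + 1), (-1) ^ (i + 1) * (indepCount n S i : ℤ)

/-!
Rotation by `2` generates a subgroup `H ≤ ℤ/2p^k` of order `p^k`, and `H` permutes the independent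
sets of each size. Since `H` is a `p`-group, `f_{i-1}` is congruent mod `p` to the number of
`H`-invariant independent sets of size `i`. An `H`-invariant set is a union of cosets of `H`, so
there are none unless `i ∈ {0, p^k, 2p^k}`; for `i = p^k` they are the two cosets of `H`, which are
translates of each other, hence both or neither independent. The whole vertex set is never
independent, so `χ̃ ≡ -1 + f_{p^k-1} ≡ -1 + (0 or 2) (mod p)`.
-/

open Pointwise AddAction

section TranslationInvariant

variable {G : Type*} [AddCommGroup G] [DecidableEq G]

def TranslationInvariant (P : Finset G → Prop) : Prop :=
  ∀ (g : G) (A : Finset G), P A → P (g +ᵥ A)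

lemma coe_eq_preimage_image_mk_of_le_stabilizer {H : AddSubgroup G} {A : Finset G}
    (hA : H ≤ stabilizer G A) :
    (A : Set G) = QuotientAddGroup.mk ⁻¹' (QuotientAddGroup.mk '' (A : Set G) : Set (G ⧸ H)) := by
  refine (Set.subset_preimage_image _ _).antisymm ?_
  rintro x ⟨a, ha, hax⟩
  have hH : -a + x ∈ H := QuotientAddGroup.eq.1 hax
  simpa using mem_stabilizer_finset'.1 (hA hH) ha

lemma card_dvd_card_of_le_stabilizer {H : AddSubgroup G} {A : Finset G}
    (hA : H ≤ stabilizer G A) : Nat.card H ∣ A.card := by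
  have hcard := Nat.card_congr
    (QuotientAddGroup.preimageMkEquivAddSubgroupProdSet H (QuotientAddGroup.mk '' (A : Set G)))
  rw [← coe_eq_preimage_image_mk_of_le_stabilizer hA, Nat.card_prod, Nat.card_coe_set_eq,
    Set.ncard_coe_finset] at hcard
  exact ⟨_, hcard⟩

def cardSubAddAction {P : Finset G → Prop} (hP : TranslationInvariant P) (i : ℕ) :
    SubAddAction G (Finset G) where
  carrier := {A | A.card = i ∧ P A}
  vadd_mem' g A hA := ⟨(Finset.card_vadd_finset g A).trans hA.1, hP g A hA.2⟩

lemma mem_fixedPoints_cardSubAddAction_iff {P : Finset G → Prop} {hP : TranslationInvariant P}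
    {i : ℕ} {H : AddSubgroup G} (A : cardSubAddAction hP i) :
    A ∈ MulAction.fixedPoints (Multiplicative H) (cardSubAddAction hP i) ↔
      H ≤ stabilizer G (A : Finset G) := by
  constructor
  · intro hfix h hh
    exact mem_stabilizer_iff.2 (congrArg Subtype.val (hfix (Multiplicative.ofAdd ⟨h, hh⟩)))
  · intro hle m
    exact Subtype.ext (mem_stabilizer_iff.1 (hle (Multiplicative.toAdd m).2))

variable [Finite G]

lemma stabilizer_eq_of_card_eq {H : AddSubgroup G} {A : Finset G}
    (hA : H ≤ stabilizer G A) (hcard : A.card = Nat.card H) : stabilizer G A = H := by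
  refine (AddSubgroup.eq_of_le_of_card_ge hA ?_).symm
  rw [← hcard]
  exact Nat.le_of_dvd (hcard ▸ Nat.card_pos) (card_dvd_card_of_le_stabilizer le_rfl)

lemma coe_eq_vadd_of_card_eq {H : AddSubgroup G} {A : Finset G}
    (hA : H ≤ stabilizer G A) (hcard : A.card = Nat.card H) {a : G} (ha : a ∈ A) :
    (A : Set G) = a +ᵥ (H : Set G) := by
  have hsub : a +ᵥ (H : Set G) ⊆ A := by
    rw [← stabilizer_eq_of_card_eq hA hcard, ← stabilizer_coe_finset]
    exact vadd_set_stabilizer_subset ha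
  refine (Set.eq_of_subset_of_ncard_le hsub ?_ A.finite_toSet).symm
  rw [Set.ncard_coe_finset, Set.ncard_vadd_set, ← Nat.card_coe_set_eq, hcard, SetLike.coe_sort_coe]

theorem card_modEq_card_invariant {p n : ℕ} [Fact p.Prime] {P : Finset G → Prop}
    (hP : TranslationInvariant P) {H : AddSubgroup G} (hH : Nat.card H = p ^ n) (i : ℕ) :
    Nat.card {A : Finset G // A.card = i ∧ P A} ≡
      Nat.card {A : Finset G // (A.card = i ∧ P A) ∧ H ≤ stabilizer G A} [MOD p] := by
  have hmod := (IsPGroup.of_card (G := Multiplicative H) hH).card_modEq_card_fixedPoints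
    (cardSubAddAction hP i)
  rwa [Nat.card_congr ((Equiv.subtypeEquivRight mem_fixedPoints_cardSubAddAction_iff).trans
    (Equiv.subtypeSubtypeEquivSubtypeInter _ fun A => H ≤ stabilizer G A))] at hmod

theorem prime_dvd_card_of_not_dvd {p n : ℕ} [Fact p.Prime] {P : Finset G → Prop}
    (hP : TranslationInvariant P) {H : AddSubgroup G} (hH : Nat.card H = p ^ n) {i : ℕ}
    (hi : ¬ Nat.card H ∣ i) : p ∣ Nat.card {A : Finset G // A.card = i ∧ P A} := by
  have : IsEmpty {A : Finset G // (A.card = i ∧ P A) ∧ H ≤ stabilizer G A} :=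
    ⟨fun ⟨A, ⟨hcard, _⟩, hle⟩ => hi (hcard ▸ card_dvd_card_of_le_stabilizer hle)⟩
  simpa [Nat.modEq_zero_iff_dvd] using card_modEq_card_invariant hP hH i

lemma setOf_invariant_eq_orbit {P : Finset G → Prop} (hP : TranslationInvariant P)
    {H : AddSubgroup G} {A₀ : Finset G}
    (hA₀ : (A₀.card = Nat.card H ∧ P A₀) ∧ H ≤ stabilizer G A₀) :
    {A : Finset G | (A.card = Nat.card H ∧ P A) ∧ H ≤ stabilizer G A} = orbit G A₀ := by
  obtain ⟨⟨hcard₀, hP₀⟩, hle₀⟩ := hA₀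
  obtain ⟨a₀, ha₀⟩ := Finset.card_pos.1 (hcard₀ ▸ Nat.card_pos)
  ext B
  constructor
  · rintro ⟨⟨hcard, -⟩, hle⟩
    obtain ⟨b, hb⟩ := Finset.card_pos.1 (hcard ▸ Nat.card_pos)
    refine ⟨b - a₀, Finset.coe_inj.1 ?_⟩
    rw [Finset.coe_vadd_finset, coe_eq_vadd_of_card_eq hle₀ hcard₀ ha₀, vadd_vadd,
      sub_add_cancel, coe_eq_vadd_of_card_eq hle hcard hb]
  · rintro ⟨g, rfl⟩
    exact ⟨⟨(Finset.card_vadd_finset g A₀).trans hcard₀, hP g A₀ hP₀⟩,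
      (stabilizer_vadd_eq_right (G := G) g A₀).symm ▸ hle₀⟩

theorem card_invariant_eq_zero_or_index {P : Finset G → Prop} (hP : TranslationInvariant P)
    (H : AddSubgroup G) :
    Nat.card {A : Finset G // (A.card = Nat.card H ∧ P A) ∧ H ≤ stabilizer G A} = 0 ∨
      Nat.card {A : Finset G // (A.card = Nat.card H ∧ P A) ∧ H ≤ stabilizer G A} = H.index := by
  rcases isEmpty_or_nonempty {A : Finset G // (A.card = Nat.card H ∧ P A) ∧ H ≤ stabilizer G A}
    with hempty | ⟨A₀, hA₀⟩
  · exact Or.inl Nat.card_of_isEmpty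
  · right
    calc Nat.card {A : Finset G // (A.card = Nat.card H ∧ P A) ∧ H ≤ stabilizer G A}
        = Nat.card (orbit G A₀) := by rw [← setOf_invariant_eq_orbit hP hA₀]; rfl
      _ = (stabilizer G A₀).index := by rw [index_stabilizer, Nat.card_coe_set_eq]
      _ = H.index := by rw [stabilizer_eq_of_card_eq hA₀.2 hA₀.1.1]

theorem card_modEq_zero_or_index {p n : ℕ} [Fact p.Prime] {P : Finset G → Prop}
    (hP : TranslationInvariant P) {H : AddSubgroup G} (hH : Nat.card H = p ^ n) :
    Nat.card {A : Finset G // A.card = p ^ n ∧ P A} ≡ 0 [MOD p] ∨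
      Nat.card {A : Finset G // A.card = p ^ n ∧ P A} ≡ H.index [MOD p] := by
  have hmod := card_modEq_card_invariant hP hH (p ^ n)
  rw [← hH] at hmod ⊢
  rcases card_invariant_eq_zero_or_index hP H with h | h
  · exact Or.inl (h ▸ hmod)
  · exact Or.inr (h ▸ hmod)

end TranslationInvariant

section Circulant

lemma circGraph_adj_add_left {n : ℕ} {S : Set ℕ} (g a b : ZMod n) :
    (circGraph n S).Adj (g + a) (g + b) ↔ (circGraph n S).Adj a b := by
  simp [circGraph, circDist]

lemma translationInvariant_isIndepSet' (n : ℕ) (S : Set ℕ) :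
    TranslationInvariant (IsIndepSet' n S) := by
  intro g A hA
  simp only [IsIndepSet', Finset.mem_vadd_finset, vadd_eq_add, forall_exists_index, and_imp]
  rintro _ a ha rfl _ b hb rfl
  rw [circGraph_adj_add_left]
  exact hA a ha b hb

lemma indepCount_zero (n : ℕ) (S : Set ℕ) : indepCount n S 0 = 1 :=
  Nat.card_eq_one_iff_exists.2
    ⟨⟨∅, rfl, by simp [IsIndepSet']⟩, fun A => Subtype.ext (Finset.card_eq_zero.1 A.2.1)⟩

lemma circDist_zero_natCast {n s : ℕ} [NeZero n] (hs : 0 < s) (hsn : 2 * s ≤ n) :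
    circDist n 0 s = s := by
  have hval : ((s : ℕ) : ZMod n).val = s := ZMod.val_cast_of_lt (by omega)
  have hne : ((s : ℕ) : ZMod n) ≠ 0 := fun h => by simp [h] at hval; omega
  rw [circDist, zero_sub, sub_zero, ZMod.neg_val, if_neg hne, hval]
  omega

lemma indepCount_self {n s : ℕ} [NeZero n] {S : Set ℕ} (hs : s ∈ S) (hs0 : 0 < s)
    (hsn : 2 * s ≤ n) : indepCount n S n = 0 := by
  refine Nat.card_eq_zero.2 (Or.inl ⟨fun ⟨A, hcard, hA⟩ => ?_⟩)
  obtain rfl : A = Finset.univ := Finset.eq_univ_of_card A (by rw [hcard, ZMod.card])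
  refine hA 0 (Finset.mem_univ _) s (Finset.mem_univ _) ⟨fun h => ?_, ?_⟩
  · have hdist := circDist_zero_natCast (n := n) hs0 hsn
    rw [← h, circDist, sub_self, ZMod.val_zero, min_self] at hdist
    omega
  · rwa [circDist_zero_natCast hs0 hsn]

lemma card_zmultiples_two (m : ℕ) [NeZero m] :
    Nat.card (AddSubgroup.zmultiples (2 : ZMod (2 * m))) = m := by
  rw [Nat.card_zmultiples, ← Nat.cast_ofNat (R := ZMod (2 * m)) (n := 2),
    ZMod.addOrderOf_coe _ (by simp [NeZero.ne m]), Nat.gcd_mul_right_left,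
    Nat.mul_div_cancel_left _ two_pos]

lemma index_zmultiples_two (m : ℕ) [NeZero m] :
    (AddSubgroup.zmultiples (2 : ZMod (2 * m))).index = 2 := by
  have h := (AddSubgroup.zmultiples (2 : ZMod (2 * m))).index_mul_card
  rw [card_zmultiples_two, Nat.card_zmod] at h
  exact Nat.eq_of_mul_eq_mul_right (Nat.pos_of_ne_zero (NeZero.ne m)) h

variable {p k : ℕ}

lemma prime_dvd_indepCount (hp : p.Prime) (S : Set ℕ) {i : ℕ} (hi0 : i ≠ 0) (hik : i ≠ p ^ k)
    (hi : i < 2 * p ^ k) : p ∣ indepCount (2 * p ^ k) S i := by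
  have : Fact p.Prime := ⟨hp⟩
  have : NeZero (p ^ k) := ⟨pow_ne_zero k hp.ne_zero⟩
  refine prime_dvd_card_of_not_dvd (translationInvariant_isIndepSet' _ S)
    (card_zmultiples_two (p ^ k)) ?_
  rw [card_zmultiples_two]
  rintro ⟨j, rfl⟩
  have hj : j < 2 := Nat.lt_of_mul_lt_mul_left (a := p ^ k) (by linarith)
  interval_cases j <;> simp_all

lemma indepCount_modEq_zero_or_two (hp : p.Prime) (S : Set ℕ) :
    indepCount (2 * p ^ k) S (p ^ k) ≡ 0 [MOD p] ∨
      indepCount (2 * p ^ k) S (p ^ k) ≡ 2 [MOD p] := by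
  have : Fact p.Prime := ⟨hp⟩
  have : NeZero (p ^ k) := ⟨pow_ne_zero k hp.ne_zero⟩
  have h := card_modEq_zero_or_index (translationInvariant_isIndepSet' _ S)
    (card_zmultiples_two (p ^ k))
  rwa [index_zmultiples_two] at h

lemma redEuler_modEq (hp : p.Prime) (hodd : Odd p) {S : Set ℕ} (hS : S ⊆ Set.Icc 1 (p ^ k))
    (hSne : S.Nonempty) :
    redEuler (2 * p ^ k) S ≡ indepCount (2 * p ^ k) S (p ^ k) - 1 [ZMOD p] := by
  have : NeZero (2 * p ^ k) := ⟨by positivity [hp.ne_zero]⟩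
  obtain ⟨s, hs⟩ := hSne
  have hfull : indepCount (2 * p ^ k) S (2 * p ^ k) = 0 :=
    indepCount_self hs (hS hs).1 (by linarith [(hS hs).2])
  rw [← ZMod.intCast_eq_intCast_iff, redEuler]
  push_cast
  rw [Finset.sum_eq_add 0 (p ^ k) (pow_ne_zero k hp.ne_zero).symm ?_ (by simp)
    (fun h => absurd (Finset.mem_range.2 (by omega)) h)]
  · simp only [zero_add, pow_one, indepCount_zero, Nat.cast_one, mul_one,
      (hodd.pow.add_one).neg_one_pow, one_mul]
    ring
  · rintro i hi ⟨hi0, hik⟩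
    obtain rfl | hi := (Nat.lt_succ_iff.1 (Finset.mem_range.1 hi)).eq_or_lt
    · simp [hfull]
    · simp [(ZMod.natCast_eq_zero_iff _ _).2 (prime_dvd_indepCount hp S hi0 hik hi)]

end Circulant

theorem stmt15_general (p k n : ℕ) (hp : p.Prime) (hodd : Odd p)
    (hn : n = 2 * p ^ k) (S : Set ℕ) (hS : S ⊆ Set.Icc 1 (p ^ k)) (hSne : S.Nonempty) :
    redEuler n S ≠ 0 ∧
      (redEuler n S ≡ 1 [ZMOD (p : ℤ)] ∨ redEuler n S ≡ -1 [ZMOD (p : ℤ)]) := by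
  subst hn
  have hχ := redEuler_modEq hp hodd hS hSne
  have hpm : redEuler (2 * p ^ k) S ≡ 1 [ZMOD p] ∨ redEuler (2 * p ^ k) S ≡ -1 [ZMOD p] := by
    rcases indepCount_modEq_zero_or_two hp S with h | h
    · simpa using Or.inr (hχ.trans ((Int.natCast_modEq_iff.2 h).sub_right 1))
    · simpa using Or.inl (hχ.trans ((Int.natCast_modEq_iff.2 h).sub_right 1))
  refine ⟨fun h0 => ?_, hpm⟩
  have hdvd : (p : ℤ) ∣ 1 := by
    rcases hpm with h | h <;> simpa [h0] using h.dvd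
  exact hp.not_dvd_one (Int.natCast_dvd_natCast.1 hdvd)

theorem stmt15 (p k n : ℕ) (hp : p.Prime) (hodd : Odd p) (hk : 0 < k)
    (hn : n = 2 * p ^ k) (S : Set ℕ) (hS : S ⊆ Set.Icc 1 (p ^ k)) (hSne : S.Nonempty) :
    redEuler n S ≠ 0 ∧
      (redEuler n S ≡ 1 [ZMOD (p : ℤ)] ∨ redEuler n S ≡ -1 [ZMOD (p : ℤ)]) :=
  stmt15_general p k n hp hodd hn S hS hSne
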